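/- arXiv:1303.7227 — 2 statements merged into one kernel-verified Lean document; each statement's English description precedes it below -/
import Mathlib

section
/- Let X be a topological space, Y a topological vector space, S : X → 2^Y an upper semicontinuous correspondence with compact values, C ⊆ Y closed and K ⊆ Y compact. Then the correspondence T : X → 2^Y defined by T(x) = (S(x) + C) ∩ K is upper semicontinuous. -/
open Pointwise

/-- A correspondence `T : X → 2^Y` is upper semicontinuous if for every open `V`,
the set `{x | T x ⊆ V}` is open. -/
def UpperSemicontinuousCorr {X Y : Type*} [TopologicalSpace X] [TopologicalSpace Y]
    (T : X → Set Y) : Prop :=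
  ∀ V : Set Y, IsOpen V → IsOpen {x | T x ⊆ V}

/-!
`(S x + C) ∩ K` leaves an open set `V` exactly when `S x` meets the set `K \ V - C`.
Since `K \ V` is compact and `C` is closed, that set is closed, so upper semicontinuity of `S`
applied to its complement gives the claim.
-/

theorem Set.add_inter_subset_iff_subset_compl_diff_sub {G : Type*} [AddGroup G]
    {A C K V : Set G} : (A + C) ∩ K ⊆ V ↔ A ⊆ (K \ V - C)ᶜ := by
  constructor
  · rintro h a ha ⟨k, ⟨hkK, hkV⟩, c, hc, rfl⟩
    exact hkV (h ⟨⟨k - c, ha, c, hc, sub_add_cancel k c⟩, hkK⟩)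
  · rintro h _ ⟨⟨a, ha, c, hc, rfl⟩, hK⟩
    by_contra hV
    exact h ha ⟨a + c, ⟨hK, hV⟩, c, hc, add_sub_cancel_right a c⟩

theorem IsCompact.isClosed_sub {G : Type*} [AddGroup G] [TopologicalSpace G]
    [IsTopologicalAddGroup G] {K C : Set G} (hK : IsCompact K) (hC : IsClosed C) :
    IsClosed (K - C) := by
  rw [sub_eq_add_neg]
  exact hC.neg.add_left_of_isCompact hK

theorem minkowski_sum_inter_compact_usc_general
    {X Y : Type*} [TopologicalSpace X]
    [AddCommGroup Y] [TopologicalSpace Y] [IsTopologicalAddGroup Y]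
    (S : X → Set Y) (hS : UpperSemicontinuousCorr S)
    (C K : Set Y) (hC : IsClosed C) (hK : IsCompact K) :
    UpperSemicontinuousCorr (fun x => (S x + C) ∩ K) := by
  intro V hV
  simp only [Set.add_inter_subset_iff_subset_compl_diff_sub]
  exact hS _ ((hK.diff hV).isClosed_sub hC).isOpen_compl

theorem minkowski_sum_inter_compact_usc
    {X Y : Type*} [TopologicalSpace X]
    [AddCommGroup Y] [Module ℝ Y] [TopologicalSpace Y] [IsTopologicalAddGroup Y]
    [ContinuousSMul ℝ Y]
    (S : X → Set Y) (hS : UpperSemicontinuousCorr S) (hScomp : ∀ x, IsCompact (S x))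
    (C K : Set Y) (hC : IsClosed C) (hK : IsCompact K) :
    UpperSemicontinuousCorr (fun x => (S x + C) ∩ K) :=
  minkowski_sum_inter_compact_usc_general S hS C K hC hK
end

section
/- Let X be a topological space, E a locally convex topological vector space, Y ⊆ E nonempty, T : X → 2^Y a correspondence, and D ⊆ Y compact. Let ß be a basis of neighborhoods of 0 in E consisting of open absolutely convex symmetric sets. For each V ∈ ß define T^V : X → 2^Y by T^V(x) = (T(x) + V) ∩ D. Then for every x ∈ X, the intersection over all V ∈ ß of the graph-closure correspondences satisfies ⋂_{V ∈ ß} cl(T^V)(x) ⊆ cl(T)(x), where for a correspondence S the correspondence cl(S) is defined by cl(S)(x) = {y ∈ Y : (x,y) ∈ closure of Graph(S) in X × Y}. -/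
open Pointwise

/-- The graph-closure correspondence: `clGr T x = {y | (x,y) ∈ closure (Graph T)}`. -/
def clGr {X Y : Type*} [TopologicalSpace X] [TopologicalSpace Y]
    (T : X → Set Y) (x : X) : Set Y :=
  {y | (x, y) ∈ closure {p : X × Y | p.2 ∈ T p.1}}

/-!
Since `T^V(x) ⊆ T(x) + V`, it suffices to treat `T + V`. Given a neighbourhood `A × B` of
`(x, y)`, choose `V` so small that `y + (V - V) ⊆ B`. A point `(x', t + v)` of the graph of
`T + V` with `x' ∈ A` and `t + v - y ∈ V` yields the point `(x', t)` of the graph of `T` with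
`t - y ∈ V - V`, so `(x', t) ∈ A × B`.
-/

open Filter Set Topology

theorem clGr_mono {X Y : Type*} [TopologicalSpace X] [TopologicalSpace Y]
    {S T : X → Set Y} (hST : ∀ x, S x ⊆ T x) (x : X) : clGr S x ⊆ clGr T x :=
  fun _ hy => closure_mono (fun p hp => hST p.1 hp) hy

theorem mem_clGr_of_forall_mem_clGr_add {X E ι : Type*} [TopologicalSpace X]
    [AddCommGroup E] [TopologicalSpace E] [IsTopologicalAddGroup E]
    {p : ι → Prop} {s : ι → Set E} (hbasis : (𝓝 (0 : E)).HasBasis p s)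
    {T : X → Set E} {x : X} {y : E}
    (h : ∀ i, p i → y ∈ clGr (fun x' => T x' + s i) x) : y ∈ clGr T x := by
  refine mem_closure_iff_nhds.mpr fun U hU => ?_
  obtain ⟨A, hA, B, hB, hAB⟩ := mem_nhds_prod_iff.mp hU
  have hdiff : {d : E × E | y + (d.1 - d.2) ∈ B} ∈ 𝓝 (0 : E) ×ˢ 𝓝 0 := by
    rw [← nhds_prod_eq]
    exact (show ContinuousAt (fun d : E × E => y + (d.1 - d.2)) 0 by fun_prop).preimage_mem_nhds
      (by simpa using hB)
  obtain ⟨W, hW, hWW⟩ := mem_prod_self_iff.mp hdiff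
  obtain ⟨i, hi, hiW⟩ := hbasis.mem_iff.mp hW
  have hnear : {e : E | e - y ∈ s i} ∈ 𝓝 y :=
    (continuous_sub_right y).continuousAt.preimage_mem_nhds (by simpa using hbasis.mem_of_mem hi)
  obtain ⟨⟨x', _⟩, ⟨hx', hnear'⟩, t, ht, v, hv, rfl⟩ :=
    mem_closure_iff_nhds.mp (h i hi) _ (prod_mem_nhds hA hnear)
  refine ⟨(x', t), hAB ⟨hx', ?_⟩, ht⟩
  have hty : y + (t + v - y - v) = t := by abel
  rw [← hty]
  exact hWW (mk_mem_prod (hiW hnear') (hiW hv))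

theorem inter_graph_closures_subset_general
    {X E : Type*} [TopologicalSpace X]
    [AddCommGroup E] [TopologicalSpace E] [IsTopologicalAddGroup E]
    (T : X → Set E)
    (D : Set E)
    (Bas : Set (Set E))
    (hbasis : (nhds (0 : E)).HasBasis (· ∈ Bas) id) :
    ∀ x : X, (⋂ V ∈ Bas, clGr (fun x' => (T x' + V) ∩ D) x) ⊆ clGr T x := by
  intro x y hy
  exact mem_clGr_of_forall_mem_clGr_add hbasis fun V hV =>
    clGr_mono (fun _ => inter_subset_left) x (mem_iInter₂.mp hy V hV)

theorem inter_graph_closures_subset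
    {X E : Type*} [TopologicalSpace X]
    [AddCommGroup E] [Module ℝ E] [TopologicalSpace E] [IsTopologicalAddGroup E]
    [ContinuousSMul ℝ E] [LocallyConvexSpace ℝ E]
    (Y : Set E) (hY : Y.Nonempty)
    (T : X → Set E) (hTY : ∀ x, T x ⊆ Y)
    (D : Set E) (hDY : D ⊆ Y) (hD : IsCompact D)
    (Bas : Set (Set E))
    (hbasis : (nhds (0 : E)).HasBasis (· ∈ Bas) id)
    (hBas : ∀ V ∈ Bas, IsOpen V ∧ V = -V ∧ Convex ℝ V ∧ Balanced ℝ V) :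
    ∀ x : X, (⋂ V ∈ Bas, clGr (fun x' => (T x' + V) ∩ D) x) ⊆ clGr T x :=
  inter_graph_closures_subset_general T D Bas hbasis
end
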